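/- arXiv:1406.5792 — 2 statements merged into one kernel-verified Lean document; each statement's English description precedes it below -/
import Mathlib

section
/- Differentiating the eigenvalue relation yields the Hellmann–Feynman-type formula for smooth coefficients (no interface): 2 k_j k_jX = ∫_{-H}^{0} (γ₀ n₀²)_X φ_j² dz − ∫_{-H}^{0} γ₀X (φ_jz)² dz − k_j² ∫_{-H}^{0} γ₀X φ_j² dz, where φ_j is the normalized eigenfunction with eigenvalue k_j². -/
open intervalIntegral

open Function intervalIntegral MeasureTheory Set Metric

namespace HFaux

noncomputable def p1 (f : ℝ → ℝ → ℝ) (X z : ℝ) : ℝ := fderiv ℝ (uncurry f) (X, z) (1, 0)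
noncomputable def p2 (f : ℝ → ℝ → ℝ) (X z : ℝ) : ℝ := fderiv ℝ (uncurry f) (X, z) (0, 1)
noncomputable def pm (f : ℝ → ℝ → ℝ) (X z : ℝ) : ℝ :=
  fderiv ℝ (fderiv ℝ (uncurry f)) (X, z) (1, 0) (0, 1)
noncomputable def p22 (f : ℝ → ℝ → ℝ) (X z : ℝ) : ℝ :=
  fderiv ℝ (fderiv ℝ (uncurry f)) (X, z) (0, 1) (0, 1)

variable {f : ℝ → ℝ → ℝ}

lemma hasDerivAt_p1 (hf : Differentiable ℝ (uncurry f)) (X z : ℝ) :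
    HasDerivAt (fun X' => f X' z) (p1 f X z) X := by
  have h := ((hf (X, z)).hasFDerivAt.comp X (hasFDerivAt_prodMk_left X z)).hasDerivAt
  exact h

lemma hasDerivAt_p2 (hf : Differentiable ℝ (uncurry f)) (X z : ℝ) :
    HasDerivAt (fun t => f X t) (p2 f X z) z := by
  have h := ((hf (X, z)).hasFDerivAt.comp z (hasFDerivAt_prodMk_right X z)).hasDerivAt
  exact h

lemma continuous_p1 (hf : ContDiff ℝ 1 (uncurry f)) : Continuous (uncurry (p1 f)) :=
  (hf.continuous_fderiv one_ne_zero).clm_apply continuous_const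

lemma continuous_p2 (hf : ContDiff ℝ 1 (uncurry f)) : Continuous (uncurry (p2 f)) :=
  (hf.continuous_fderiv one_ne_zero).clm_apply continuous_const

lemma hasFDerivAt_applied (hf : ContDiff ℝ 2 (uncurry f)) (p : ℝ × ℝ) (w : ℝ × ℝ) :
    HasFDerivAt (fun q => fderiv ℝ (uncurry f) q w)
      ((fderiv ℝ (fderiv ℝ (uncurry f)) p).flip w) p := by
  have hD : Differentiable ℝ (fderiv ℝ (uncurry f)) :=
    (hf.fderiv_right (m := 1) (by norm_num)).differentiable one_ne_zero
  have h := (hD p).hasFDerivAt.clm_apply (hasFDerivAt_const w p)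
  simpa using h

lemma hasDerivAt_p2_X (hf : ContDiff ℝ 2 (uncurry f)) (X z : ℝ) :
    HasDerivAt (fun X' => p2 f X' z) (pm f X z) X := by
  have h := ((hasFDerivAt_applied hf (X, z) ((0 : ℝ), (1 : ℝ))).comp X
    (hasFDerivAt_prodMk_left X z)).hasDerivAt
  exact h

lemma hasDerivAt_p2_z (hf : ContDiff ℝ 2 (uncurry f)) (X z : ℝ) :
    HasDerivAt (fun t => p2 f X t) (p22 f X z) z := by
  have h := ((hasFDerivAt_applied hf (X, z) ((0 : ℝ), (1 : ℝ))).comp z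
    (hasFDerivAt_prodMk_right X z)).hasDerivAt
  exact h

lemma hasDerivAt_p1_z (hf : ContDiff ℝ 2 (uncurry f)) (X z : ℝ) :
    HasDerivAt (fun t => p1 f X t) (pm f X z) z := by
  have h := ((hasFDerivAt_applied hf (X, z) ((1 : ℝ), (0 : ℝ))).comp z
    (hasFDerivAt_prodMk_right X z)).hasDerivAt
  have hsym := ((hf.contDiffAt (x := (X, z))).isSymmSndFDerivAt (by simp [minSmoothness_of_isRCLikeNormedField])).eq
    (v := ((0 : ℝ), (1 : ℝ))) (w := ((1 : ℝ), (0 : ℝ)))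
  simp only [p1, pm]
  rw [← hsym]
  exact h

lemma continuous_pm (hf : ContDiff ℝ 2 (uncurry f)) : Continuous (uncurry (pm f)) :=
  (((hf.fderiv_right (by norm_num : (1:WithTop ℕ∞) + 1 ≤ 2)).continuous_fderiv one_ne_zero).clm_apply
    continuous_const).clm_apply continuous_const

lemma continuous_p22 (hf : ContDiff ℝ 2 (uncurry f)) : Continuous (uncurry (p22 f)) :=
  (((hf.fderiv_right (by norm_num : (1:WithTop ℕ∞) + 1 ≤ 2)).continuous_fderiv one_ne_zero).clm_apply
    continuous_const).clm_apply continuous_const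

lemma hasDerivAt_param_integral {g g' : ℝ → ℝ → ℝ} {a b X₀ : ℝ}
    (hg : Continuous (uncurry g)) (hg' : Continuous (uncurry g'))
    (hd : ∀ X z, HasDerivAt (fun X' => g X' z) (g' X z) X) :
    HasDerivAt (fun X => ∫ z in a..b, g X z) (∫ z in a..b, g' X₀ z) X₀ := by
  obtain ⟨C, hC⟩ := ((isCompact_closedBall X₀ 1).prod isCompact_uIcc).exists_bound_of_continuousOn
    (s := closedBall X₀ 1 ×ˢ uIcc a b) hg'.continuousOn
  refine (intervalIntegral.hasDerivAt_integral_of_dominated_loc_of_deriv_le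
      (μ := volume) (F := g) (F' := g') (bound := fun _ => C) (ball_mem_nhds X₀ one_pos) ?_ ?_ ?_ ?_ ?_ ?_).2
  · exact Filter.Eventually.of_forall fun x =>
      (hg.comp (continuous_const.prodMk continuous_id)).aestronglyMeasurable
  · exact (hg.comp (continuous_const.prodMk continuous_id)).intervalIntegrable a b
  · exact (hg'.comp (continuous_const.prodMk continuous_id)).aestronglyMeasurable
  · exact Filter.Eventually.of_forall fun t ht x hx =>
      hC (x, t) ⟨ball_subset_closedBall hx, uIoc_subset_uIcc ht⟩
  · exact intervalIntegrable_const
  · exact Filter.Eventually.of_forall fun t _ x _ => hd x t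

lemma _root_.Continuous.cmul {α : Type*} [TopologicalSpace α] {f : α → ℝ}
    (h : Continuous f) (c : ℝ) : Continuous fun x => c * f x := continuous_const.mul h

end HFaux

open HFaux

/-- Hellmann–Feynman-type formula for smooth coefficients
(no interface):
`2 k_j k_jX = ∫ (γ₀ n₀²)_X φ_j² − ∫ γ₀X (φ_jz)² − k_j² ∫ γ₀X φ_j²`. -/
theorem hellmann_feynman_formula
    (H : ℝ) (hH : 0 < H)
    (γ₀ n₀ φj : ℝ → ℝ → ℝ)  -- arguments: X, z
    (kj : ℝ → ℝ)
    (hγ : ContDiff ℝ 2 (Function.uncurry γ₀))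
    (hn : ContDiff ℝ 2 (Function.uncurry n₀))
    (hφj : ContDiff ℝ 2 (Function.uncurry φj))
    (hkj : ContDiff ℝ 1 kj)
    (hγpos : ∀ X z, 0 < γ₀ X z)
    (heqj : ∀ X, ∀ z ∈ Set.Icc (-H) 0,
      deriv (fun t => γ₀ X t * deriv (φj X) t) z + γ₀ X z * (n₀ X z)^2 * φj X z
        = γ₀ X z * (kj X)^2 * φj X z)
    (hbc0 : ∀ X, φj X 0 = 0)
    (hbcH : ∀ X, deriv (φj X) (-H) = 0)
    (hnorm : ∀ X, ∫ z in (-H)..0, γ₀ X z * (φj X z)^2 = 1) :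
    ∀ X, 2 * kj X * deriv kj X
      = (∫ z in (-H)..0,
          deriv (fun X' => γ₀ X' z * (n₀ X' z)^2) X * (φj X z)^2)
        - (∫ z in (-H)..0,
            deriv (fun X' => γ₀ X' z) X * (deriv (φj X) z)^2)
        - (kj X)^2 * ∫ z in (-H)..0,
            deriv (fun X' => γ₀ X' z) X * (φj X z)^2 := by
  intro X
  have hγd : Differentiable ℝ (uncurry γ₀) := hγ.differentiable (by norm_num)
  have hnd : Differentiable ℝ (uncurry n₀) := hn.differentiable (by norm_num)
  have hφd : Differentiable ℝ (uncurry φj) := hφj.differentiable (by norm_num)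
  have Cγ : Continuous (uncurry γ₀) := hγ.continuous
  have Cn : Continuous (uncurry n₀) := hn.continuous
  have Cφ : Continuous (uncurry φj) := hφj.continuous
  have Cp1γ : Continuous (uncurry (p1 γ₀)) := continuous_p1 (hγ.of_le (by norm_num))
  have Cp2γ : Continuous (uncurry (p2 γ₀)) := continuous_p2 (hγ.of_le (by norm_num))
  have Cp1n : Continuous (uncurry (p1 n₀)) := continuous_p1 (hn.of_le (by norm_num))
  have Cp1φ : Continuous (uncurry (p1 φj)) := continuous_p1 (hφj.of_le (by norm_num))
  have Cp2φ : Continuous (uncurry (p2 φj)) := continuous_p2 (hφj.of_le (by norm_num))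
  have Cpmφ : Continuous (uncurry (pm φj)) := continuous_pm hφj
  have Cp22φ : Continuous (uncurry (p22 φj)) := continuous_p22 hφj
  have ez : ∀ Y : ℝ, Continuous (fun z : ℝ => (Y, z)) :=
    fun Y => continuous_const.prodMk continuous_id
  have cγ : ∀ Y, Continuous (fun z => γ₀ Y z) := fun Y => Cγ.comp (ez Y)
  have cn : ∀ Y, Continuous (fun z => n₀ Y z) := fun Y => Cn.comp (ez Y)
  have cφ : ∀ Y, Continuous (fun z => φj Y z) := fun Y => Cφ.comp (ez Y)
  have cp1γ : ∀ Y, Continuous (fun z => p1 γ₀ Y z) := fun Y => Cp1γ.comp (ez Y)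
  have cp2γ : ∀ Y, Continuous (fun z => p2 γ₀ Y z) := fun Y => Cp2γ.comp (ez Y)
  have cp1n : ∀ Y, Continuous (fun z => p1 n₀ Y z) := fun Y => Cp1n.comp (ez Y)
  have cp1φ : ∀ Y, Continuous (fun z => p1 φj Y z) := fun Y => Cp1φ.comp (ez Y)
  have cp2φ : ∀ Y, Continuous (fun z => p2 φj Y z) := fun Y => Cp2φ.comp (ez Y)
  have cpmφ : ∀ Y, Continuous (fun z => pm φj Y z) := fun Y => Cpmφ.comp (ez Y)
  have cp22φ : ∀ Y, Continuous (fun z => p22 φj Y z) := fun Y => Cp22φ.comp (ez Y)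
  have hz : ∀ Y z, deriv (φj Y) z = p2 φj Y z := fun Y z => (hasDerivAt_p2 hφd Y z).deriv
  have hIcc : uIcc (-H) 0 = Icc (-H) 0 := uIcc_of_le (by linarith)
  have hp2H : ∀ Y, p2 φj Y (-H) = 0 := fun Y => by rw [← hz Y (-H)]; exact hbcH Y
  have hp10 : p1 φj X 0 = 0 := by
    have h1 := hasDerivAt_p1 hφd X 0
    have h2 : (fun X' => φj X' 0) = fun _ => (0 : ℝ) := funext fun Y => hbc0 Y
    rw [h2] at h1
    exact h1.unique (hasDerivAt_const X 0)
  -- ODE in partial-derivative form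
  have hode : ∀ Y, ∀ z ∈ Icc (-H) 0,
      p2 γ₀ Y z * p2 φj Y z + γ₀ Y z * p22 φj Y z
        = γ₀ Y z * (kj Y)^2 * φj Y z - γ₀ Y z * (n₀ Y z)^2 * φj Y z := by
    intro Y z hzI
    have hu : HasDerivAt (fun t => γ₀ Y t * p2 φj Y t)
        (p2 γ₀ Y z * p2 φj Y z + γ₀ Y z * p22 φj Y z) z :=
      (hasDerivAt_p2 hγd Y z).mul (hasDerivAt_p2_z hφj Y z)
    have he := heqj Y z hzI
    have hfun : (fun t => γ₀ Y t * deriv (φj Y) t) = fun t => γ₀ Y t * p2 φj Y t :=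
      funext fun t => by rw [hz Y t]
    rw [hfun, hu.deriv] at he
    linarith
  -- energy identity
  have hE : ∀ Y, (kj Y)^2
      = (∫ z in (-H)..0, γ₀ Y z * (n₀ Y z)^2 * (φj Y z)^2)
        - ∫ z in (-H)..0, γ₀ Y z * (p2 φj Y z)^2 := by
    intro Y
    have hu'int : IntervalIntegrable
        (fun t => p2 γ₀ Y t * p2 φj Y t + γ₀ Y t * p22 φj Y t) volume (-H) 0 :=
      (((cp2γ Y).mul (cp2φ Y)).add ((cγ Y).mul (cp22φ Y))).intervalIntegrable _ _
    have hibp := intervalIntegral.integral_deriv_mul_eq_sub (a := -H) (b := 0)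
      (u := fun t => γ₀ Y t * p2 φj Y t) (v := φj Y)
      (u' := fun t => p2 γ₀ Y t * p2 φj Y t + γ₀ Y t * p22 φj Y t) (v' := p2 φj Y)
      (fun t _ => (hasDerivAt_p2 hγd Y t).mul (hasDerivAt_p2_z hφj Y t))
      (fun t _ => hasDerivAt_p2 hφd Y t)
      hu'int ((cp2φ Y).intervalIntegrable _ _)
    simp only [hbc0 Y, hp2H Y, mul_zero, zero_mul, sub_zero] at hibp
    have hsplit : (∫ t in (-H)..0,
        ((p2 γ₀ Y t * p2 φj Y t + γ₀ Y t * p22 φj Y t) * φj Y t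
          + (γ₀ Y t * p2 φj Y t) * p2 φj Y t))
        = (∫ t in (-H)..0, (p2 γ₀ Y t * p2 φj Y t + γ₀ Y t * p22 φj Y t) * φj Y t)
          + ∫ t in (-H)..0, (γ₀ Y t * p2 φj Y t) * p2 φj Y t :=
      intervalIntegral.integral_add
        (((((cp2γ Y).mul (cp2φ Y)).add ((cγ Y).mul (cp22φ Y))).mul (cφ Y)).intervalIntegrable _ _)
        ((((cγ Y).mul (cp2φ Y)).mul (cp2φ Y)).intervalIntegrable _ _)
    have hu'v : (∫ t in (-H)..0, (p2 γ₀ Y t * p2 φj Y t + γ₀ Y t * p22 φj Y t) * φj Y t)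
        = (kj Y)^2 - ∫ t in (-H)..0, γ₀ Y t * (n₀ Y t)^2 * (φj Y t)^2 := by
      have hcg := intervalIntegral.integral_congr (μ := volume) (a := -H) (b := 0)
        (f := fun t => (p2 γ₀ Y t * p2 φj Y t + γ₀ Y t * p22 φj Y t) * φj Y t)
        (g := fun t => (kj Y)^2 * (γ₀ Y t * (φj Y t)^2) - γ₀ Y t * (n₀ Y t)^2 * (φj Y t)^2)
        (fun t ht => by rw [hIcc] at ht; simp only []; rw [hode Y t ht]; ring)
      rw [hcg, intervalIntegral.integral_sub
          ((((cγ Y).fun_mul ((cφ Y).fun_pow 2)).cmul ((kj Y)^2)).intervalIntegrable _ _)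
          ((((cγ Y).fun_mul ((cn Y).fun_pow 2)).fun_mul ((cφ Y).fun_pow 2)).intervalIntegrable _ _),
        intervalIntegral.integral_const_mul, hnorm Y, mul_one]
    have huv' : (∫ t in (-H)..0, (γ₀ Y t * p2 φj Y t) * p2 φj Y t)
        = ∫ t in (-H)..0, γ₀ Y t * (p2 φj Y t)^2 :=
      intervalIntegral.integral_congr (fun t _ => by ring)
    rw [hsplit, hu'v, huv'] at hibp
    linarith
  -- derivative of kj^2 via the energy identity
  have hD1 : HasDerivAt (fun Y => ∫ z in (-H)..0, γ₀ Y z * (n₀ Y z)^2 * (φj Y z)^2)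
      (∫ z in (-H)..0,
        (p1 γ₀ X z * (n₀ X z)^2 * (φj X z)^2
          + (2 * (γ₀ X z * n₀ X z * p1 n₀ X z * (φj X z)^2)
            + 2 * (γ₀ X z * (n₀ X z)^2 * (φj X z * p1 φj X z))))) X := by
    apply hasDerivAt_param_integral
      (g := fun Y z => γ₀ Y z * (n₀ Y z)^2 * (φj Y z)^2)
      (g' := fun Y z => p1 γ₀ Y z * (n₀ Y z)^2 * (φj Y z)^2
          + (2 * (γ₀ Y z * n₀ Y z * p1 n₀ Y z * (φj Y z)^2)
            + 2 * (γ₀ Y z * (n₀ Y z)^2 * (φj Y z * p1 φj Y z))))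
    · exact (Cγ.mul (Cn.pow 2)).mul (Cφ.pow 2)
    · exact (Cp1γ.mul (Cn.pow 2)).mul (Cφ.pow 2) |>.add
        ((((Cγ.mul Cn).mul Cp1n).mul (Cφ.pow 2)).cmul 2 |>.add
          (((Cγ.mul (Cn.pow 2)).mul (Cφ.mul Cp1φ)).cmul 2))
    · intro Y z
      have h := ((hasDerivAt_p1 hγd Y z).fun_mul ((hasDerivAt_p1 hnd Y z).fun_pow 2)).fun_mul
        ((hasDerivAt_p1 hφd Y z).fun_pow 2)
      refine h.congr_deriv ?_
      push_cast
      ring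
  have hD2 : HasDerivAt (fun Y => ∫ z in (-H)..0, γ₀ Y z * (p2 φj Y z)^2)
      (∫ z in (-H)..0,
        (p1 γ₀ X z * (p2 φj X z)^2 + 2 * (γ₀ X z * (p2 φj X z * pm φj X z)))) X := by
    apply hasDerivAt_param_integral
      (g := fun Y z => γ₀ Y z * (p2 φj Y z)^2)
      (g' := fun Y z => p1 γ₀ Y z * (p2 φj Y z)^2 + 2 * (γ₀ Y z * (p2 φj Y z * pm φj Y z)))
    · exact Cγ.mul (Cp2φ.pow 2)
    · exact (Cp1γ.mul (Cp2φ.pow 2)).add ((Cγ.mul (Cp2φ.mul Cpmφ)).cmul 2)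
    · intro Y z
      have h := (hasDerivAt_p1 hγd Y z).fun_mul ((hasDerivAt_p2_X hφj Y z).fun_pow 2)
      refine h.congr_deriv ?_
      push_cast
      ring
  have hDk : HasDerivAt (fun Y => kj Y ^ 2) (2 * kj X * deriv kj X) X := by
    have h := (((hkj.differentiable one_ne_zero) X).hasDerivAt).fun_pow 2
    refine h.congr_deriv ?_
    push_cast
    ring
  have hfe : (fun Y => kj Y ^ 2)
      = fun Y => (∫ z in (-H)..0, γ₀ Y z * (n₀ Y z)^2 * (φj Y z)^2)
        - ∫ z in (-H)..0, γ₀ Y z * (p2 φj Y z)^2 := funext fun Y => hE Y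
  have key1 : 2 * kj X * deriv kj X
      = (∫ z in (-H)..0,
          (p1 γ₀ X z * (n₀ X z)^2 * (φj X z)^2
            + (2 * (γ₀ X z * n₀ X z * p1 n₀ X z * (φj X z)^2)
              + 2 * (γ₀ X z * (n₀ X z)^2 * (φj X z * p1 φj X z)))))
        - ∫ z in (-H)..0,
            (p1 γ₀ X z * (p2 φj X z)^2 + 2 * (γ₀ X z * (p2 φj X z * pm φj X z))) := by
    refine hDk.unique ?_
    rw [hfe]
    exact hD1.sub hD2
  -- derivative of the normalization
  have hN : HasDerivAt (fun Y => ∫ z in (-H)..0, γ₀ Y z * (φj Y z)^2)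
      (∫ z in (-H)..0,
        (p1 γ₀ X z * (φj X z)^2 + 2 * (γ₀ X z * (φj X z * p1 φj X z)))) X := by
    apply hasDerivAt_param_integral
      (g := fun Y z => γ₀ Y z * (φj Y z)^2)
      (g' := fun Y z => p1 γ₀ Y z * (φj Y z)^2 + 2 * (γ₀ Y z * (φj Y z * p1 φj Y z)))
    · exact Cγ.mul (Cφ.pow 2)
    · exact (Cp1γ.mul (Cφ.pow 2)).add ((Cγ.mul (Cφ.mul Cp1φ)).cmul 2)
    · intro Y z
      have h := (hasDerivAt_p1 hγd Y z).fun_mul ((hasDerivAt_p1 hφd Y z).fun_pow 2)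
      refine h.congr_deriv ?_
      push_cast
      ring
  have hN0 : (∫ z in (-H)..0,
      (p1 γ₀ X z * (φj X z)^2 + 2 * (γ₀ X z * (φj X z * p1 φj X z)))) = 0 := by
    have hc : (fun Y => ∫ z in (-H)..0, γ₀ Y z * (φj Y z)^2) = fun _ => (1 : ℝ) :=
      funext fun Y => hnorm Y
    rw [hc] at hN
    exact hN.unique (hasDerivAt_const X 1)
  -- cross-term integration by parts
  have hibp2 := intervalIntegral.integral_deriv_mul_eq_sub (a := -H) (b := 0)
    (u := fun t => γ₀ X t * p2 φj X t) (v := fun t => p1 φj X t)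
    (u' := fun t => p2 γ₀ X t * p2 φj X t + γ₀ X t * p22 φj X t) (v' := fun t => pm φj X t)
    (fun t _ => (hasDerivAt_p2 hγd X t).mul (hasDerivAt_p2_z hφj X t))
    (fun t _ => hasDerivAt_p1_z hφj X t)
    ((((cp2γ X).mul (cp2φ X)).add ((cγ X).mul (cp22φ X))).intervalIntegrable _ _)
    ((cpmφ X).intervalIntegrable _ _)
  simp only [hp10, hp2H X, mul_zero, zero_mul, sub_zero] at hibp2
  have hsplit2 : (∫ t in (-H)..0,
      ((p2 γ₀ X t * p2 φj X t + γ₀ X t * p22 φj X t) * p1 φj X t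
        + (γ₀ X t * p2 φj X t) * pm φj X t))
      = (∫ t in (-H)..0, (p2 γ₀ X t * p2 φj X t + γ₀ X t * p22 φj X t) * p1 φj X t)
        + ∫ t in (-H)..0, (γ₀ X t * p2 φj X t) * pm φj X t :=
    intervalIntegral.integral_add
      (((((cp2γ X).mul (cp2φ X)).add ((cγ X).mul (cp22φ X))).mul (cp1φ X)).intervalIntegrable _ _)
      ((((cγ X).mul (cp2φ X)).mul (cpmφ X)).intervalIntegrable _ _)
  have hu'v2 : (∫ t in (-H)..0, (p2 γ₀ X t * p2 φj X t + γ₀ X t * p22 φj X t) * p1 φj X t)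
      = (kj X)^2 * (∫ t in (-H)..0, γ₀ X t * (φj X t * p1 φj X t))
        - ∫ t in (-H)..0, γ₀ X t * (n₀ X t)^2 * (φj X t * p1 φj X t) := by
    have hcg := intervalIntegral.integral_congr (μ := volume) (a := -H) (b := 0)
      (f := fun t => (p2 γ₀ X t * p2 φj X t + γ₀ X t * p22 φj X t) * p1 φj X t)
      (g := fun t => (kj X)^2 * (γ₀ X t * (φj X t * p1 φj X t))
        - γ₀ X t * (n₀ X t)^2 * (φj X t * p1 φj X t))
      (fun t ht => by rw [hIcc] at ht; simp only []; rw [hode X t ht]; ring)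
    rw [hcg, intervalIntegral.integral_sub
        ((((cγ X).fun_mul ((cφ X).fun_mul (cp1φ X))).cmul ((kj X)^2)).intervalIntegrable _ _)
        ((((cγ X).fun_mul ((cn X).fun_pow 2)).fun_mul ((cφ X).fun_mul (cp1φ X))).intervalIntegrable _ _),
      intervalIntegral.integral_const_mul]
  have huv'2 : (∫ t in (-H)..0, (γ₀ X t * p2 φj X t) * pm φj X t)
      = ∫ t in (-H)..0, γ₀ X t * (p2 φj X t * pm φj X t) :=
    intervalIntegral.integral_congr (fun t _ => by ring)
  rw [hsplit2, hu'v2, huv'2] at hibp2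
  -- split the integrals appearing in key1 and hN0
  have e1 : (∫ z in (-H)..0,
      (p1 γ₀ X z * (n₀ X z)^2 * (φj X z)^2
        + (2 * (γ₀ X z * n₀ X z * p1 n₀ X z * (φj X z)^2)
          + 2 * (γ₀ X z * (n₀ X z)^2 * (φj X z * p1 φj X z)))))
      = (∫ z in (-H)..0, p1 γ₀ X z * (n₀ X z)^2 * (φj X z)^2)
        + (2 * (∫ z in (-H)..0, γ₀ X z * n₀ X z * p1 n₀ X z * (φj X z)^2)
          + 2 * ∫ z in (-H)..0, γ₀ X z * (n₀ X z)^2 * (φj X z * p1 φj X z)) := by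
    rw [intervalIntegral.integral_add
        ((((cp1γ X).fun_mul ((cn X).fun_pow 2)).fun_mul ((cφ X).fun_pow 2)).intervalIntegrable _ _)
        ((((((cγ X).fun_mul (cn X)).fun_mul (cp1n X)).fun_mul ((cφ X).fun_pow 2)).cmul 2 |>.fun_add
          ((((cγ X).fun_mul ((cn X).fun_pow 2)).fun_mul ((cφ X).fun_mul (cp1φ X))).cmul 2)
          |>.intervalIntegrable _ _)),
      intervalIntegral.integral_add
        ((((((cγ X).fun_mul (cn X)).fun_mul (cp1n X)).fun_mul ((cφ X).fun_pow 2)).cmul 2).intervalIntegrable _ _)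
        (((((cγ X).fun_mul ((cn X).fun_pow 2)).fun_mul ((cφ X).fun_mul (cp1φ X))).cmul 2).intervalIntegrable _ _),
      intervalIntegral.integral_const_mul, intervalIntegral.integral_const_mul]
  have e2 : (∫ z in (-H)..0,
      (p1 γ₀ X z * (p2 φj X z)^2 + 2 * (γ₀ X z * (p2 φj X z * pm φj X z))))
      = (∫ z in (-H)..0, p1 γ₀ X z * (p2 φj X z)^2)
        + 2 * ∫ z in (-H)..0, γ₀ X z * (p2 φj X z * pm φj X z) := by
    rw [intervalIntegral.integral_add
        (((cp1γ X).fun_mul ((cp2φ X).fun_pow 2)).intervalIntegrable _ _)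
        ((((cγ X).fun_mul ((cp2φ X).fun_mul (cpmφ X))).cmul 2).intervalIntegrable _ _),
      intervalIntegral.integral_const_mul]
  have e3 : (∫ z in (-H)..0,
      (p1 γ₀ X z * (φj X z)^2 + 2 * (γ₀ X z * (φj X z * p1 φj X z))))
      = (∫ z in (-H)..0, p1 γ₀ X z * (φj X z)^2)
        + 2 * ∫ z in (-H)..0, γ₀ X z * (φj X z * p1 φj X z) := by
    rw [intervalIntegral.integral_add
        (((cp1γ X).fun_mul ((cφ X).fun_pow 2)).intervalIntegrable _ _)
        ((((cγ X).fun_mul ((cφ X).fun_mul (cp1φ X))).cmul 2).intervalIntegrable _ _),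
      intervalIntegral.integral_const_mul]
  -- convert the goal integrals to p-form
  have h1 : (∫ z in (-H)..0, deriv (fun X' => γ₀ X' z * (n₀ X' z)^2) X * (φj X z)^2)
      = (∫ z in (-H)..0, p1 γ₀ X z * (n₀ X z)^2 * (φj X z)^2)
        + 2 * ∫ z in (-H)..0, γ₀ X z * n₀ X z * p1 n₀ X z * (φj X z)^2 := by
    have hcg := intervalIntegral.integral_congr (μ := volume) (a := -H) (b := 0)
      (f := fun z => deriv (fun X' => γ₀ X' z * (n₀ X' z)^2) X * (φj X z)^2)
      (g := fun z => p1 γ₀ X z * (n₀ X z)^2 * (φj X z)^2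
        + 2 * (γ₀ X z * n₀ X z * p1 n₀ X z * (φj X z)^2))
      (fun z _ => by
        simp only []
        rw [((hasDerivAt_p1 hγd X z).fun_mul ((hasDerivAt_p1 hnd X z).fun_pow 2)).deriv]
        push_cast
        ring)
    rw [hcg, intervalIntegral.integral_add
        ((((cp1γ X).fun_mul ((cn X).fun_pow 2)).fun_mul ((cφ X).fun_pow 2)).intervalIntegrable _ _)
        ((((((cγ X).fun_mul (cn X)).fun_mul (cp1n X)).fun_mul ((cφ X).fun_pow 2)).cmul 2).intervalIntegrable _ _),
      intervalIntegral.integral_const_mul]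
  have h2 : (∫ z in (-H)..0, deriv (fun X' => γ₀ X' z) X * (deriv (φj X) z)^2)
      = ∫ z in (-H)..0, p1 γ₀ X z * (p2 φj X z)^2 :=
    intervalIntegral.integral_congr (fun z _ => by
      rw [(hasDerivAt_p1 hγd X z).deriv, hz X z])
  have h3 : (∫ z in (-H)..0, deriv (fun X' => γ₀ X' z) X * (φj X z)^2)
      = ∫ z in (-H)..0, p1 γ₀ X z * (φj X z)^2 :=
    intervalIntegral.integral_congr (fun z _ => by
      rw [(hasDerivAt_p1 hγd X z).deriv])
  rw [h1, h2, h3]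
  rw [e1, e2] at key1
  rw [e3] at hN0
  nlinarith [key1, hN0, hibp2]
end

section
/- Transparent rigid boundary condition preserves flux: if A satisfies 2ikA_x + ik_xA + A_yy + αA = 0 with real α and k > 0 on the strip {(x,y) : B₁(x) ≤ y ≤ B₂(x)}, with boundary conditions A_y − i B_{m,x} k A = 0 at y = B_m(x) (m = 1,2), then d/dx ∫_{B₁(x)}^{B₂(x)} k|A|² dy = 0. -/
open MeasureTheory Complex intervalIntegral

lemma aux_normsq {f : ℝ → ℂ} {f' : ℂ} {x : ℝ} (hf : HasDerivAt f f' x) :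
    HasDerivAt (fun t => ‖f t‖ ^ 2) (2 * ((starRingEnd ℂ) (f x) * f').re) x := by
  have hre : HasDerivAt (fun t => (f t).re) f'.re x :=
    (Complex.reCLM.hasFDerivAt.comp_hasDerivAt x hf)
  have him : HasDerivAt (fun t => (f t).im) f'.im x :=
    (Complex.imCLM.hasFDerivAt.comp_hasDerivAt x hf)
  have h := (hre.mul hre).add (him.mul him)
  have heq : (fun t => ‖f t‖ ^ 2) = fun t => (f t).re * (f t).re + (f t).im * (f t).im := by
    funext t
    rw [← Complex.normSq_apply, ← Complex.sq_norm]
  rw [heq]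
  refine h.congr_deriv ?_
  simp [Complex.mul_re, Complex.conj_re, Complex.conj_im]
  ring

lemma aux_norm_sq_eq (z : ℂ) : ‖z‖ ^ 2 = z.re * z.re + z.im * z.im := by
  rw [← Complex.normSq_apply, ← Complex.sq_norm]

/-- Transparent rigid boundary conditions preserve the flux:
if `A` satisfies `2ikA_x + ik_xA + A_yy + αA = 0` with real `α` and `k > 0`
on the moving strip `{(x,y) : B₁(x) ≤ y ≤ B₂(x)}`, with boundary conditions
`A_y − i B_{m,x} k A = 0` at `y = B_m(x)` (`m = 1,2`), then
`d/dx ∫_{B₁(x)}^{B₂(x)} k |A|² dy = 0`. -/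
theorem moving_strip_flux_conservation
    (A : ℝ → ℝ → ℂ) (k : ℝ → ℝ) (α : ℝ → ℝ → ℝ) (B₁ B₂ : ℝ → ℝ)
    (hA : ContDiff ℝ 2 (Function.uncurry A))
    (hk : ContDiff ℝ 1 k) (hkpos : ∀ x, 0 < k x)
    (hα : Continuous (Function.uncurry α))
    (hB₁ : ContDiff ℝ 1 B₁) (hB₂ : ContDiff ℝ 1 B₂)
    (hB : ∀ x, B₁ x < B₂ x)
    (hPDE : ∀ x, ∀ y ∈ Set.Icc (B₁ x) (B₂ x),
      2 * Complex.I * (k x : ℂ) * deriv (fun x' => A x' y) x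
        + Complex.I * ((deriv k x : ℝ) : ℂ) * A x y
        + deriv (deriv (A x)) y
        + (α x y : ℂ) * A x y = 0)
    (hbc1 : ∀ x, deriv (A x) (B₁ x)
      - Complex.I * ((deriv B₁ x : ℝ) : ℂ) * (k x : ℂ) * A x (B₁ x) = 0)
    (hbc2 : ∀ x, deriv (A x) (B₂ x)
      - Complex.I * ((deriv B₂ x : ℝ) : ℂ) * (k x : ℂ) * A x (B₂ x) = 0) :
    ∀ x, deriv (fun x' => ∫ y in B₁ x'..B₂ x', k x' * ‖A x' y‖^2) x = 0 := by
  -- global differentiability facts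
  have hAd : Differentiable ℝ (Function.uncurry A) := hA.differentiable (by norm_num)
  have hAcont : Continuous (Function.uncurry A) := hA.continuous
  have hfdc : Continuous (fun p : ℝ × ℝ => fderiv ℝ (Function.uncurry A) p) :=
    hA.continuous_fderiv (by norm_num)
  set Ax : ℝ → ℝ → ℂ := fun x y => fderiv ℝ (Function.uncurry A) (x, y) (1, 0) with hAxdef
  set Ay : ℝ → ℝ → ℂ := fun x y => fderiv ℝ (Function.uncurry A) (x, y) (0, 1) with hAydef
  have hAxc : Continuous (fun p : ℝ × ℝ => Ax p.1 p.2) :=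
    ((ContinuousLinearMap.apply ℝ ℂ ((1 : ℝ), (0 : ℝ))).continuous).comp hfdc
  have hAyc : Continuous (fun p : ℝ × ℝ => Ay p.1 p.2) :=
    ((ContinuousLinearMap.apply ℝ ℂ ((0 : ℝ), (1 : ℝ))).continuous).comp hfdc
  have hAx : ∀ x y, HasDerivAt (fun x' => A x' y) (Ax x y) x := by
    intro x y
    exact (hAd (x, y)).hasFDerivAt.comp_hasDerivAt x
      ((hasDerivAt_id x).prodMk (hasDerivAt_const x y))
  have hAy : ∀ x y, HasDerivAt (A x) (Ay x y) y := by
    intro x y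
    exact (hAd (x, y)).hasFDerivAt.comp_hasDerivAt y
      ((hasDerivAt_const y x).prodMk (hasDerivAt_id y))
  have hAyderiv : ∀ x y, deriv (A x) y = Ay x y := fun x y => (hAy x y).deriv
  have hB₁d : ∀ x, HasDerivAt B₁ (deriv B₁ x) x := fun x => (hB₁.differentiable one_ne_zero x).hasDerivAt
  have hB₂d : ∀ x, HasDerivAt B₂ (deriv B₂ x) x := fun x => (hB₂.differentiable one_ne_zero x).hasDerivAt
  have hkd : ∀ x, HasDerivAt k (deriv k x) x := fun x => (hk.differentiable one_ne_zero x).hasDerivAt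
  have hB₁c : Continuous (deriv B₁) := hB₁.continuous_deriv le_rfl
  have hB₂c : Continuous (deriv B₂) := hB₂.continuous_deriv le_rfl
  have hkc : Continuous k := hk.continuous
  have hkc' : Continuous (deriv k) := hk.continuous_deriv le_rfl
  -- the straightening map
  set L : ℝ → ℝ → ℝ := fun x t => B₁ x + t * (B₂ x - B₁ x) with hLdef
  set Lx : ℝ → ℝ → ℝ := fun x t => deriv B₁ x + t * (deriv B₂ x - deriv B₁ x) with hLxdef
  have hLc : Continuous (fun p : ℝ × ℝ => L p.1 p.2) := by
    apply Continuous.add (hB₁.continuous.comp continuous_fst)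
    exact continuous_snd.mul ((hB₂.continuous.comp continuous_fst).sub
      (hB₁.continuous.comp continuous_fst))
  have hLxc : Continuous (fun p : ℝ × ℝ => Lx p.1 p.2) := by
    apply Continuous.add (hB₁c.comp continuous_fst)
    exact continuous_snd.mul ((hB₂c.comp continuous_fst).sub (hB₁c.comp continuous_fst))
  have hLd : ∀ x t, HasDerivAt (fun x' => L x' t) (Lx x t) x := by
    intro x t
    exact (hB₁d x).add (((hB₂d x).sub (hB₁d x)).const_mul t)
  -- derivative of A along the moving point
  have hAL : ∀ x t, HasDerivAt (fun x' => A x' (L x' t))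
      (Ax x (L x t) + Lx x t • Ay x (L x t)) x := by
    intro x t
    have hc : HasDerivAt (fun x' => (x', L x' t)) ((1 : ℝ), Lx x t) x :=
      (hasDerivAt_id x).prodMk (hLd x t)
    have h := (hAd (x, L x t)).hasFDerivAt.comp_hasDerivAt x hc
    have hv : ((1 : ℝ), Lx x t) = ((1 : ℝ), (0 : ℝ)) + Lx x t • ((0 : ℝ), (1 : ℝ)) := by
      simp
    rw [hv, map_add, (fderiv ℝ (Function.uncurry A) (x, L x t)).map_smul] at h
    exact h
  -- the straightened integrand and its x-derivative
  set S : ℝ → ℝ → ℝ := fun x t =>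
    2 * ((starRingEnd ℂ) (A x (L x t)) * (Ax x (L x t) + Lx x t • Ay x (L x t))).re with hSdef
  set G : ℝ → ℝ → ℝ := fun x t => (B₂ x - B₁ x) * (k x * ‖A x (L x t)‖ ^ 2) with hGdef
  set G' : ℝ → ℝ → ℝ := fun x t =>
    (deriv B₂ x - deriv B₁ x) * (k x * ‖A x (L x t)‖ ^ 2)
      + (B₂ x - B₁ x) * (deriv k x * ‖A x (L x t)‖ ^ 2 + k x * S x t) with hG'def
  have hGd : ∀ x t, HasDerivAt (fun x' => G x' t) (G' x t) x := by
    intro x t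
    exact ((hB₂d x).sub (hB₁d x)).mul ((hkd x).mul (aux_normsq (hAL x t)))
  have hALc : Continuous (fun p : ℝ × ℝ => A p.1 (L p.1 p.2)) :=
    hAcont.comp (continuous_fst.prodMk hLc)
  have hAxLc : Continuous (fun p : ℝ × ℝ => Ax p.1 (L p.1 p.2)) :=
    hAxc.comp (continuous_fst.prodMk hLc)
  have hAyLc : Continuous (fun p : ℝ × ℝ => Ay p.1 (L p.1 p.2)) :=
    hAyc.comp (continuous_fst.prodMk hLc)
  have hSc : Continuous (fun p : ℝ × ℝ => S p.1 p.2) := by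
    apply continuous_const.mul
    exact Complex.continuous_re.comp
      (((Complex.continuous_conj.comp hALc)).mul (hAxLc.add (hLxc.smul hAyLc)))
  have hNc : Continuous (fun p : ℝ × ℝ => ‖A p.1 (L p.1 p.2)‖ ^ 2) := (hALc.norm.pow 2)
  have hGc : Continuous (fun p : ℝ × ℝ => G p.1 p.2) := by
    exact ((hB₂.continuous.comp continuous_fst).sub (hB₁.continuous.comp continuous_fst)).mul
      ((hkc.comp continuous_fst).mul hNc)
  have hG'c : Continuous (fun p : ℝ × ℝ => G' p.1 p.2) := by
    apply Continuous.add
    · exact ((hB₂c.comp continuous_fst).sub (hB₁c.comp continuous_fst)).mul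
        ((hkc.comp continuous_fst).mul hNc)
    · exact ((hB₂.continuous.comp continuous_fst).sub (hB₁.continuous.comp continuous_fst)).mul
        (((hkc'.comp continuous_fst).mul hNc).add ((hkc.comp continuous_fst).mul hSc))
  -- switching to the fixed interval
  have hswitch : ∀ x', (∫ y in B₁ x'..B₂ x', k x' * ‖A x' y‖ ^ 2) = ∫ t in (0:ℝ)..1, G x' t := by
    intro x'
    have hgc : Continuous (fun y => k x' * ‖A x' y‖ ^ 2) := by
      apply continuous_const.mul
      exact ((hAcont.comp (continuous_const.prodMk continuous_id)).norm.pow 2)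
    have h := integral_comp_smul_deriv (a := (0:ℝ)) (b := 1) (f := fun t => L x' t)
      (f' := fun _ => B₂ x' - B₁ x') (g := fun y => k x' * ‖A x' y‖ ^ 2)
      (fun t _ => ((hasDerivAt_mul_const (B₂ x' - B₁ x')).const_add (B₁ x')))
      continuousOn_const hgc
    simp only [hLdef] at h
    have h0 : B₁ x' + 0 * (B₂ x' - B₁ x') = B₁ x' := by ring
    have h1 : B₁ x' + 1 * (B₂ x' - B₁ x') = B₂ x' := by ring
    rw [h0, h1] at h
    rw [← h]
    apply integral_congr
    intro t _
    simp only [hGdef, hLdef, smul_eq_mul, Function.comp]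
  intro x
  -- differentiating under the integral sign
  have hΦ : HasDerivAt (fun x' => ∫ t in (0:ℝ)..1, G x' t) (∫ t in (0:ℝ)..1, G' x t) x := by
    have hK : IsCompact ((Set.Icc (x - 1) (x + 1)) ×ˢ (Set.Icc (0:ℝ) 1)) :=
      isCompact_Icc.prod isCompact_Icc
    obtain ⟨C, hC⟩ := hK.exists_bound_of_continuousOn hG'c.continuousOn
    have h := hasDerivAt_integral_of_dominated_loc_of_deriv_le (F := G) (F' := G')
      (x₀ := x) (a := 0) (b := 1) (bound := fun _ => C) (s := Metric.ball x 1) (μ := volume) (Metric.ball_mem_nhds x one_pos)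
      (Filter.Eventually.of_forall fun x' =>
        ((hGc.comp (continuous_const.prodMk continuous_id)).aestronglyMeasurable).restrict)
      ((hGc.comp (continuous_const.prodMk continuous_id)).intervalIntegrable 0 1)
      ((hG'c.comp (continuous_const.prodMk continuous_id)).aestronglyMeasurable).restrict
      ?_ (intervalIntegrable_const) ?_
    · exact h.2
    · apply Filter.Eventually.of_forall
      intro t ht x' hx'
      have htmem : t ∈ Set.Icc (0:ℝ) 1 := by
        rw [Set.uIoc_of_le (by norm_num : (0:ℝ) ≤ 1)] at ht
        exact Set.Ioc_subset_Icc_self ht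
      have hxmem : x' ∈ Set.Icc (x - 1) (x + 1) := by
        rw [Real.ball_eq_Ioo] at hx'
        exact Set.Ioo_subset_Icc_self hx'
      exact hC (x', t) ⟨hxmem, htmem⟩
    · exact Filter.Eventually.of_forall fun t _ x' _ => hGd x' t
  have hfun : (fun x' => ∫ y in B₁ x'..B₂ x', k x' * ‖A x' y‖ ^ 2)
      = fun x' => ∫ t in (0:ℝ)..1, G x' t := funext hswitch
  rw [hfun, hΦ.deriv]
  -- now reduce to an integral over [B₁ x, B₂ x]
  have hab : B₁ x < B₂ x := hB x
  have hd0 : B₂ x - B₁ x ≠ 0 := sub_ne_zero.mpr hab.ne'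
  set w : ℝ := (deriv B₂ x - deriv B₁ x) / (B₂ x - B₁ x) with hwdef
  set v : ℝ → ℝ := fun y =>
    deriv B₁ x + (y - B₁ x) / (B₂ x - B₁ x) * (deriv B₂ x - deriv B₁ x) with hvdef
  set Eh : ℝ → ℝ := fun y => w * (k x * ‖A x y‖ ^ 2) + (deriv k x * ‖A x y‖ ^ 2
      + k x * (2 * ((starRingEnd ℂ) (A x y) * (Ax x y + v y • Ay x y)).re)) with hEhdef
  have hvL : ∀ t, v (L x t) = Lx x t := by
    intro t
    simp only [hvdef, hLdef, hLxdef]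
    field_simp
    ring
  have hGh : ∀ t, G' x t = (B₂ x - B₁ x) • Eh (L x t) := by
    intro t
    simp only [hG'def, hSdef, hEhdef, smul_eq_mul, hvL t, hwdef]
    field_simp
  have hstep1 : (∫ t in (0:ℝ)..1, G' x t)
      = ∫ t in (0:ℝ)..1, (B₂ x - B₁ x) • Eh (L x t) := integral_congr fun t _ => hGh t
  rw [hstep1]
  -- continuity of various sections
  have hvc : Continuous v := by
    apply continuous_const.add
    exact (((continuous_id.sub continuous_const).div_const _).mul continuous_const)
  have hAsec : Continuous (A x) := hAcont.comp (continuous_const.prodMk continuous_id)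
  have hAxsec : Continuous (fun y => Ax x y) := hAxc.comp (continuous_const.prodMk continuous_id)
  have hAysec : Continuous (fun y => Ay x y) := hAyc.comp (continuous_const.prodMk continuous_id)
  have hEhc : Continuous Eh := by
    apply Continuous.add (continuous_const.mul (continuous_const.mul (hAsec.norm.pow 2)))
    apply Continuous.add (continuous_const.mul (hAsec.norm.pow 2))
    apply continuous_const.mul
    apply continuous_const.mul
    exact Complex.continuous_re.comp ((Complex.continuous_conj.comp hAsec).mul
      (hAxsec.add (hvc.smul hAysec)))
  have hchg := integral_comp_smul_deriv (a := (0:ℝ)) (b := 1) (f := fun t => L x t)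
    (f' := fun _ => B₂ x - B₁ x) (g := Eh)
    (fun t _ => ((hasDerivAt_mul_const (B₂ x - B₁ x)).const_add (B₁ x)))
    continuousOn_const hEhc
  simp only [hLdef] at hchg
  have h0 : B₁ x + 0 * (B₂ x - B₁ x) = B₁ x := by ring
  have h1 : B₁ x + 1 * (B₂ x - B₁ x) = B₂ x := by ring
  rw [h0, h1] at hchg
  have hstep2 : (∫ t in (0:ℝ)..1, (B₂ x - B₁ x) • Eh (L x t))
      = ∫ y in B₁ x..B₂ x, Eh y := by
    rw [← hchg]
    apply integral_congr
    intro t _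
    simp only [hLdef, Function.comp]
  rw [hstep2]
  -- split the integrand into the two pieces
  set P : ℝ → ℝ := fun y => deriv k x * ‖A x y‖ ^ 2
      + k x * (2 * ((starRingEnd ℂ) (A x y) * Ax x y).re) with hPdef
  set Q : ℝ → ℝ := fun y => k x * (w * ‖A x y‖ ^ 2
      + v y * (2 * ((starRingEnd ℂ) (A x y) * Ay x y).re)) with hQdef
  have hsmulre : ∀ (r : ℝ) (z : ℂ), (r • z).re = r * z.re := fun r z => by
    simp [Complex.real_smul]
  have hEPQ : ∀ y, Eh y = P y + Q y := by
    intro y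
    simp only [hEhdef, hPdef, hQdef, mul_add, Complex.add_re, mul_smul_comm, hsmulre]
    ring
  have hPc : Continuous P := by
    apply Continuous.add (continuous_const.mul (hAsec.norm.pow 2))
    exact continuous_const.mul (continuous_const.mul (Complex.continuous_re.comp
      ((Complex.continuous_conj.comp hAsec).mul hAxsec)))
  have hQc : Continuous Q := by
    apply continuous_const.mul
    apply Continuous.add (continuous_const.mul (hAsec.norm.pow 2))
    exact hvc.mul (continuous_const.mul (Complex.continuous_re.comp
      ((Complex.continuous_conj.comp hAsec).mul hAysec)))
  have hstep3 : (∫ y in B₁ x..B₂ x, Eh y)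
      = (∫ y in B₁ x..B₂ x, P y) + ∫ y in B₁ x..B₂ x, Q y := by
    rw [← integral_add (hPc.intervalIntegrable _ _) (hQc.intervalIntegrable _ _)]
    exact integral_congr fun y _ => hEPQ y
  rw [hstep3]
  -- the Q part via the fundamental theorem of calculus
  have hvd : ∀ y, HasDerivAt v w y := by
    intro y
    have h2 := ((((hasDerivAt_id y).sub_const (B₁ x)).div_const (B₂ x - B₁ x)).mul_const
      (deriv B₂ x - deriv B₁ x)).const_add (deriv B₁ x)
    have hw2 : w = 1 / (B₂ x - B₁ x) * (deriv B₂ x - deriv B₁ x) := by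
      rw [hwdef]; ring
    rw [hw2]
    exact h2
  have hψ : ∀ y, HasDerivAt (fun y => v y * ‖A x y‖ ^ 2)
      (w * ‖A x y‖ ^ 2 + v y * (2 * ((starRingEnd ℂ) (A x y) * Ay x y).re)) y :=
    fun y => (hvd y).mul (aux_normsq (hAy x y))
  have hva : v (B₁ x) = deriv B₁ x := by simp [hvdef]
  have hvb : v (B₂ x) = deriv B₂ x := by
    simp only [hvdef]
    field_simp
    ring
  have hQint : (∫ y in B₁ x..B₂ x, Q y)
      = k x * (deriv B₂ x * ‖A x (B₂ x)‖ ^ 2 - deriv B₁ x * ‖A x (B₁ x)‖ ^ 2) := by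
    simp only [hQdef]
    rw [intervalIntegral.integral_const_mul]
    rw [integral_eq_sub_of_hasDerivAt (fun y _ => hψ y)
      ((Continuous.intervalIntegrable (by
        apply Continuous.add (continuous_const.mul (hAsec.norm.pow 2))
        exact hvc.mul (continuous_const.mul (Complex.continuous_re.comp
          ((Complex.continuous_conj.comp hAsec).mul hAysec)))) _ _))]
    rw [hva, hvb]
  -- the P part via the PDE and the fundamental theorem of calculus
  have hA2 : ContDiff ℝ 2 (A x) := hA.comp (contDiff_const.prodMk contDiff_id)
  have hA2' : Differentiable ℝ (deriv (A x)) ∧ Continuous (deriv (deriv (A x))) := by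
    rw [show (2 : WithTop ℕ∞) = 1 + 1 from rfl, contDiff_succ_iff_deriv] at hA2
    exact ⟨(contDiff_one_iff_deriv.mp hA2.2.2).1, (contDiff_one_iff_deriv.mp hA2.2.2).2⟩
  have hyyd : ∀ y, HasDerivAt (deriv (A x)) (deriv (deriv (A x)) y) y :=
    fun y => (hA2'.1 y).hasDerivAt
  set φ : ℝ → ℝ := fun y => ((starRingEnd ℂ) (A x y) * deriv (A x) y).im with hφdef
  have hφd : ∀ y, HasDerivAt φ
      (((starRingEnd ℂ) (A x y) * deriv (deriv (A x)) y).im) y := by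
    intro y
    have hconj : HasDerivAt (fun y' => (starRingEnd ℂ) (A x y')) ((starRingEnd ℂ) (Ay x y)) y := by
      simpa using (hAy x y).star
    have hmul := hconj.mul (hyyd y)
    have him := Complex.imCLM.hasFDerivAt.comp_hasDerivAt y hmul
    refine him.congr_deriv ?_
    rw [hAyderiv x y]
    simp [Complex.add_im, Complex.mul_im, Complex.conj_re, Complex.conj_im]
    ring
  have hPderiv : ∀ y ∈ Set.uIcc (B₁ x) (B₂ x), HasDerivAt (fun y => -φ y) (P y) y := by
    intro y hy
    rw [Set.uIcc_of_le hab.le] at hy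
    have h1 := (hφd y).neg
    have hpde := hPDE x y hy
    rw [(hAx x y).deriv] at hpde
    have hyyval : deriv (deriv (A x)) y = -(2 * Complex.I * (k x) * Ax x y
        + Complex.I * (deriv k x) * A x y + (α x y) * A x y) := by
      linear_combination hpde
    rw [hyyval] at h1
    refine h1.congr_deriv ?_
    simp only [hPdef]
    simp [Complex.mul_im, Complex.mul_re, Complex.add_im, Complex.add_re,
      Complex.I_re, Complex.I_im, Complex.ofReal_re, Complex.ofReal_im,
      Complex.conj_re, Complex.conj_im, Complex.neg_im, Complex.sq_norm, Complex.normSq_apply]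
    ring
  have hPint : (∫ y in B₁ x..B₂ x, P y) = -φ (B₂ x) + φ (B₁ x) := by
    rw [integral_eq_sub_of_hasDerivAt hPderiv (hPc.intervalIntegrable _ _)]
    ring
  have hφb1 : φ (B₁ x) = deriv B₁ x * (k x * ‖A x (B₁ x)‖ ^ 2) := by
    have hb := hbc1 x
    rw [sub_eq_zero] at hb
    simp only [hφdef]
    rw [hb]
    simp [Complex.mul_im, Complex.mul_re, Complex.I_re, Complex.I_im,
      Complex.ofReal_re, Complex.ofReal_im, Complex.conj_re, Complex.conj_im, Complex.sq_norm, Complex.normSq_apply]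
    ring
  have hφb2 : φ (B₂ x) = deriv B₂ x * (k x * ‖A x (B₂ x)‖ ^ 2) := by
    have hb := hbc2 x
    rw [sub_eq_zero] at hb
    simp only [hφdef]
    rw [hb]
    simp [Complex.mul_im, Complex.mul_re, Complex.I_re, Complex.I_im,
      Complex.ofReal_re, Complex.ofReal_im, Complex.conj_re, Complex.conj_im, Complex.sq_norm, Complex.normSq_apply]
    ring
  rw [hPint, hQint, hφb1, hφb2]
  ring
end
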